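/- Let G be a group and let s, t, g, x ∈ G with s·t = t·s, and let n, m ∈ ℕ. Define v = g^n, w = s⁻¹·g·s, h = t⁻¹·w^m·t, and E = x⁻¹ · (t⁻¹·v^m·t) · x. Then w^n = s⁻¹·v·s, s·h^n·s⁻¹ = t⁻¹·v^m·t, and E = x⁻¹ · (s·h^n·s⁻¹) · x. -/

import Mathlib

/-!
Conjugation is a group automorphism, so `wⁿ = s⁻¹gⁿs = s⁻¹vs` and `hⁿ = t⁻¹wᵐⁿt`.
Since `s` commutes with `t`, conjugation by `s` commutes with conjugation by `t`, whence
`s hⁿ s⁻¹ = t⁻¹ (s (wⁿ)ᵐ s⁻¹) t = t⁻¹ vᵐ t`.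
-/

theorem inv_conj_pow {G : Type*} [Group G] (a b : G) (k : ℕ) :
    (a⁻¹ * b * a) ^ k = a⁻¹ * b ^ k * a := by
  simpa using conj_pow (a := a⁻¹) (b := b) (i := k)

theorem Commute.conj_inv_conj_comm {G : Type*} [Group G] {a b : G} (hab : Commute a b)
    (y : G) : a * (b⁻¹ * y * b) * a⁻¹ = b⁻¹ * (a * y * a⁻¹) * b := by
  calc a * (b⁻¹ * y * b) * a⁻¹ = (a * b⁻¹) * y * (b * a⁻¹) := by group
    _ = (b⁻¹ * a) * y * (a⁻¹ * b) := by
        rw [hab.inv_right.eq, hab.inv_left.symm.eq]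
    _ = b⁻¹ * (a * y * a⁻¹) * b := by group

/-- Kahrobaei–Khan non-commutative ElGamal (power conjugacy search version)
correctness: with `v = g^n`, `w = s⁻¹gs`, `h = t⁻¹wᵐt`, `E = x⁻¹(t⁻¹vᵐt)x`
and `s·t = t·s`, we have `wⁿ = s⁻¹vs`, `s·hⁿ·s⁻¹ = t⁻¹vᵐt`, and
`E = x⁻¹(s·hⁿ·s⁻¹)x`. -/
theorem kk_elgamal_pcsp {G : Type*} [Group G] (s t g x : G)
    (hst : s * t = t * s) (n m : ℕ)
    (v w h E : G) (hv : v = g ^ n) (hw : w = s⁻¹ * g * s)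
    (hh : h = t⁻¹ * w ^ m * t) (hE : E = x⁻¹ * (t⁻¹ * v ^ m * t) * x) :
    w ^ n = s⁻¹ * v * s ∧
      s * h ^ n * s⁻¹ = t⁻¹ * v ^ m * t ∧
        E = x⁻¹ * (s * h ^ n * s⁻¹) * x := by
  have hwn : w ^ n = s⁻¹ * v * s := by rw [hw, hv, inv_conj_pow]
  have hhn : s * h ^ n * s⁻¹ = t⁻¹ * v ^ m * t :=
    calc s * h ^ n * s⁻¹ = s * (t⁻¹ * (w ^ n) ^ m * t) * s⁻¹ := by
          rw [hh, inv_conj_pow, ← pow_mul, ← pow_mul, mul_comm]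
      _ = t⁻¹ * (s * (w ^ n) ^ m * s⁻¹) * t := Commute.conj_inv_conj_comm hst _
      _ = t⁻¹ * v ^ m * t := by rw [hwn, inv_conj_pow]; group
  exact ⟨hwn, hhn, by rw [hhn, hE]⟩
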